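/- Let Σ₃ = Σ₁^{1/2} (Σ₁^{-1/2} Σ₂ Σ₁^{-1/2})^{1/2} Σ₁^{1/2} be the geodesic midpoint of positive definite matrices Σ₁ and Σ₂. Then for every nonzero vector z ∈ ℝ^p, log(zᵀΣ₁⁻¹z) + log(zᵀΣ₂⁻¹z) ≥ 2 log(zᵀΣ₃⁻¹z). -/

import Mathlib

/-!
Write `R = Σ₁^{1/2}` and `N = (R⁻¹ Σ₂ R⁻¹)^{1/2}`, so that `Σ₁ = R R`, `Σ₂ = R N N R` and
`Σ₃ = R N R`. With `w = R⁻¹ z` the three quadratic forms `zᵀΣ₁⁻¹z`, `zᵀΣ₂⁻¹z`, `zᵀΣ₃⁻¹z` become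
`w ⬝ w`, `N⁻¹w ⬝ N⁻¹w` and `w ⬝ N⁻¹w`, so the inequality is Cauchy–Schwarz for `w` and `N⁻¹w`,
read through the logarithm.
-/

open Matrix

noncomputable def mpow {p : ℕ} (A : Matrix (Fin p) (Fin p) ℝ) (t : ℝ) :
    Matrix (Fin p) (Fin p) ℝ :=
  if h : A.IsHermitian then
    (h.eigenvectorUnitary : Matrix (Fin p) (Fin p) ℝ) *
      Matrix.diagonal (fun i => h.eigenvalues i ^ t) *
      (star (h.eigenvectorUnitary : Matrix (Fin p) (Fin p) ℝ))
  else A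

/-- The geodesic `γ(t) = S1^{1/2} (S1^{-1/2} S2 S1^{-1/2})^t S1^{1/2}` on `S₊₊(p)`. -/
noncomputable def geo {p : ℕ} (A B : Matrix (Fin p) (Fin p) ℝ) (t : ℝ) :
    Matrix (Fin p) (Fin p) ℝ :=
  mpow A (1/2) * mpow (mpow A (-(1/2)) * B * mpow A (-(1/2))) t * mpow A (1/2)

section MatrixLemmas

variable {n 𝕜 : Type*} [Fintype n]

lemma Matrix.IsSymm.dotProduct_mulVec {α : Type*} [CommSemiring α] {A : Matrix n n α}
    (hA : A.IsSymm) (x y : n → α) : x ⬝ᵥ A *ᵥ y = (A *ᵥ x) ⬝ᵥ y := by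
  rw [Matrix.dotProduct_mulVec, ← mulVec_transpose, hA.eq]

lemma dotProduct_sq_le_dotProduct_self_mul_dotProduct_self [Field 𝕜] [LinearOrder 𝕜]
    [IsStrictOrderedRing 𝕜] (x y : n → 𝕜) : (x ⬝ᵥ y) ^ 2 ≤ (x ⬝ᵥ x) * (y ⬝ᵥ y) := by
  simpa [dotProduct, sq] using Finset.sum_mul_sq_le_sq_mul_sq Finset.univ x y

variable [DecidableEq n]

theorem sq_dotProduct_inv_conj_le [Field 𝕜] [LinearOrder 𝕜] [IsStrictOrderedRing 𝕜]
    {R N : Matrix n n 𝕜} (hR : R.IsSymm) (hN : N.IsSymm) (z : n → 𝕜) :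
    (z ⬝ᵥ (R * N * R)⁻¹ *ᵥ z) ^ 2 ≤
      (z ⬝ᵥ (R * R)⁻¹ *ᵥ z) * (z ⬝ᵥ (R * (N * N) * R)⁻¹ *ᵥ z) := by
  set w := R⁻¹ *ᵥ z
  have hRNR : z ⬝ᵥ (R * N * R)⁻¹ *ᵥ z = w ⬝ᵥ N⁻¹ *ᵥ w := by
    rw [Matrix.mul_inv_rev, Matrix.mul_inv_rev, ← mulVec_mulVec, ← mulVec_mulVec,
      hR.inv.dotProduct_mulVec]
  have hRR : z ⬝ᵥ (R * R)⁻¹ *ᵥ z = w ⬝ᵥ w := by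
    rw [Matrix.mul_inv_rev, ← mulVec_mulVec, hR.inv.dotProduct_mulVec]
  have hRNNR : z ⬝ᵥ (R * (N * N) * R)⁻¹ *ᵥ z = (N⁻¹ *ᵥ w) ⬝ᵥ (N⁻¹ *ᵥ w) := by
    rw [Matrix.mul_inv_rev, Matrix.mul_inv_rev, Matrix.mul_inv_rev, ← mulVec_mulVec,
      ← mulVec_mulVec, ← mulVec_mulVec, hR.inv.dotProduct_mulVec, hN.inv.dotProduct_mulVec]
  rw [hRNR, hRR, hRNNR]
  exact dotProduct_sq_le_dotProduct_self_mul_dotProduct_self w _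

lemma Matrix.PosDef.dotProduct_inv_mulVec_pos {A : Matrix n n ℝ} (hA : A.PosDef) {z : n → ℝ}
    (hz : z ≠ 0) : 0 < z ⬝ᵥ A⁻¹ *ᵥ z := by
  simpa using hA.inv.dotProduct_mulVec_pos hz

lemma Matrix.PosDef.mul_mul_same_of_isHermitian [Field 𝕜] [PartialOrder 𝕜] [StarRing 𝕜]
    {B U : Matrix n n 𝕜} (hB : B.PosDef) (hU : U.IsHermitian) (hU' : IsUnit U) :
    (U * B * U).PosDef := by
  have := (IsUnit.posDef_star_right_conjugate_iff hU').mpr hB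
  rwa [star_eq_conjTranspose, hU.eq] at this

end MatrixLemmas

lemma two_mul_log_le_log_add_log {a b c : ℝ} (ha : 0 < a) (hb : 0 < b) (hc : 0 < c)
    (h : a ^ 2 ≤ b * c) : 2 * Real.log a ≤ Real.log b + Real.log c := by
  have := Real.log_le_log (pow_pos ha 2) h
  rwa [Real.log_pow, Real.log_mul hb.ne' hc.ne', Nat.cast_ofNat] at this

section mpow

variable {p : ℕ} {A B : Matrix (Fin p) (Fin p) ℝ}

lemma mpow_posDef (hA : A.PosDef) (t : ℝ) : (mpow A t).PosDef := by
  rw [mpow, dif_pos hA.1, IsUnit.posDef_star_right_conjugate_iff Unitary.isUnit_coe,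
    posDef_diagonal_iff]
  exact fun i => Real.rpow_pos_of_pos (hA.eigenvalues_pos i) t

lemma mpow_mul_mpow (hA : A.PosDef) (s t : ℝ) : mpow A s * mpow A t = mpow A (s + t) := by
  simp only [mpow, dif_pos hA.1]
  set U : Matrix (Fin p) (Fin p) ℝ := ↑hA.1.eigenvectorUnitary
  have hU : star U * U = 1 := Unitary.star_mul_self_of_mem hA.1.eigenvectorUnitary.2
  simp only [Matrix.mul_assoc, ← Matrix.mul_assoc (star U), hU, Matrix.one_mul]
  rw [← Matrix.mul_assoc (diagonal _), diagonal_mul_diagonal]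
  congr 3 with i
  exact (Real.rpow_add (hA.eigenvalues_pos i) s t).symm

lemma mpow_zero (hA : A.IsHermitian) : mpow A 0 = 1 := by
  rw [mpow, dif_pos hA]
  simp

lemma mpow_one (hA : A.IsHermitian) : mpow A 1 = A := by
  rw [mpow, dif_pos hA]
  simpa using hA.spectral_theorem.symm

lemma mpow_neg (hA : A.PosDef) (t : ℝ) : mpow A (-t) = (mpow A t)⁻¹ :=
  (inv_eq_left_inv (by rw [mpow_mul_mpow hA, neg_add_cancel, mpow_zero hA.1])).symm

lemma mpow_half_mul_mpow_half (hA : A.PosDef) : mpow A (1 / 2) * mpow A (1 / 2) = A := by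
  rw [mpow_mul_mpow hA, add_halves, mpow_one hA.1]

lemma geo_posDef (hA : A.PosDef) (hB : B.PosDef) (t : ℝ) : (geo A B t).PosDef := by
  have hR := mpow_posDef hA (1 / 2)
  have hRi := mpow_posDef hA (-(1 / 2))
  have hM := hB.mul_mul_same_of_isHermitian hRi.1 hRi.isUnit
  exact (mpow_posDef hM t).mul_mul_same_of_isHermitian hR.1 hR.isUnit

end mpow

theorem log_quadform_midpoint_ineq {p : ℕ} (S1 S2 : Matrix (Fin p) (Fin p) ℝ)
    (h₁ : S1.PosDef) (h₂ : S2.PosDef) (z : Fin p → ℝ) (hz : z ≠ 0) :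
    2 * Real.log (z ⬝ᵥ (geo S1 S2 (1/2))⁻¹ *ᵥ z) ≤
      Real.log (z ⬝ᵥ S1⁻¹ *ᵥ z) + Real.log (z ⬝ᵥ S2⁻¹ *ᵥ z) := by
  set R := mpow S1 (1 / 2)
  have hR : R.PosDef := mpow_posDef h₁ _
  have hM : (R⁻¹ * S2 * R⁻¹).PosDef := h₂.mul_mul_same_of_isHermitian hR.inv.1 hR.inv.isUnit
  set N := mpow (R⁻¹ * S2 * R⁻¹) (1 / 2)
  have hG : geo S1 S2 (1 / 2) = R * N * R := by rw [geo, mpow_neg h₁]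
  have hS1 : S1 = R * R := (mpow_half_mul_mpow_half h₁).symm
  have hS2 : S2 = R * (N * N) * R := by
    have hRu : IsUnit R.det := (isUnit_iff_isUnit_det R).mp hR.isUnit
    rw [mpow_half_mul_mpow_half hM, ← mul_assoc, ← mul_assoc, mul_nonsing_inv _ hRu, one_mul,
      nonsing_inv_mul_cancel_right _ _ hRu]
  have hCS := sq_dotProduct_inv_conj_le (isHermitian_iff_isSymm.mp hR.1)
    (isHermitian_iff_isSymm.mp (mpow_posDef hM (1 / 2)).1) z
  rw [← hS1, ← hS2, ← hG] at hCS
  exact two_mul_log_le_log_add_log ((geo_posDef h₁ h₂ _).dotProduct_inv_mulVec_pos hz)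
    (h₁.dotProduct_inv_mulVec_pos hz) (h₂.dotProduct_inv_mulVec_pos hz) hCS
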